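/- arXiv:2207.05705 — 3 statements merged into one kernel-verified Lean document; each statement's English description precedes it below -/
import Mathlib

section
/- For a probability measure μ on ℝ^d with finite moments of order n(n-1), define F_n(μ) = ∫_{ℝ^{dn}} ∏_{1 ≤ i < j ≤ n} |z^i - z^j|^2 dμ(z^1)⋯dμ(z^n). Then F_n(μ) = 0 if and only if μ is a convex combination of at most n-1 Dirac measures, i.e. μ ∈ N_{n-1} = {μ = Σ_{l=1}^{n-1} α_l δ_{x^l} : α_l ≥ 0, x^l ∈ ℝ^d}. -/
/-!
The integrand `pairDistSqProd z = ∏_{i<j} ‖z i - z j‖²` is continuous and vanishes exactly at the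
tuples `z` with a repeated entry. Bounding it by `∏ i, (1 + ‖z i‖) ^ (n(n-1))` makes it integrable,
so `F_n(μ) = 0` means that it vanishes `μ^⊗n`-a.e., hence everywhere on the support of `μ^⊗n`, which
contains every tuple of points of `supp μ`. So `supp μ` has fewer than `n` points, and `μ`, which is
carried by its support, is a sum of fewer than `n` Dirac masses. Conversely, if `μ` is carried by
fewer than `n` points, almost every tuple has a repeated entry by the pigeonhole principle.
-/

open MeasureTheory Finset Function
open scoped ENNReal NNReal

lemma Set.exists_injective_mapsTo_of_card_le_encard {ι X : Type*} [Finite ι] [Nonempty X]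
    {S : Set X} (h : ENat.card ι ≤ S.encard) : ∃ y : ι → X, (∀ i, y i ∈ S) ∧ Injective y := by
  rw [← Set.encard_univ] at h
  obtain ⟨y, hyS, hinj⟩ := Set.finite_univ.exists_injOn_of_encard_le h
  exact ⟨y, fun i => hyS (Set.mem_univ i), Set.injOn_univ.1 hinj⟩

lemma Continuous.eq_of_ae_eq_of_mem_support {X Y : Type*} [TopologicalSpace X]
    [MeasurableSpace X] [TopologicalSpace Y] [T2Space Y] {ν : Measure X} {f g : X → Y}
    (hf : Continuous f) (hg : Continuous g) (h : f =ᵐ[ν] g) {x : X} (hx : x ∈ ν.support) :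
    f x = g x := by
  by_contra hne
  have hpos := (Measure.mem_support_iff_forall x).1 hx _ ((isOpen_ne_fun hf hg).mem_nhds hne)
  exact hpos.ne' (ae_iff.1 h)

lemma MeasureTheory.Measure.mem_support_pi {ι : Type*} [Fintype ι] {α : ι → Type*}
    [∀ i, MetricSpace (α i)] [∀ i, MeasurableSpace (α i)] {μ : ∀ i, Measure (α i)}
    [∀ i, SigmaFinite (μ i)]
    {z : ∀ i, α i} (hz : ∀ i, z i ∈ (μ i).support) : z ∈ (Measure.pi μ).support := by
  rw [Metric.nhds_basis_ball.mem_measureSupport]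
  intro r hr
  rw [pi_ball _ _ hr]
  exact CanonicallyOrderedAdd.prod_pos.2 fun i _ =>
    (Metric.nhds_basis_ball.mem_measureSupport.1 (hz i)) r hr

lemma exists_fin_sum_smul_dirac_eq {α : Type*} [MeasurableSpace α] [Nonempty α] (w : α → ℝ≥0) :
    ∀ {k : ℕ} (s : Finset α), #s ≤ k → ∃ (a : Fin k → ℝ≥0) (x : Fin k → α),
      ∑ y ∈ s, (w y : ℝ≥0∞) • Measure.dirac y = ∑ l, (a l : ℝ≥0∞) • Measure.dirac (x l)
  | 0, s, hs => ⟨0, fun _ => Classical.arbitrary α, by simp [card_eq_zero.1 (Nat.le_zero.1 hs)]⟩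
  | k + 1, s, hs => by
    classical
    rcases s.eq_empty_or_nonempty with rfl | ⟨y, hy⟩
    · exact ⟨0, fun _ => Classical.arbitrary α, by simp⟩
    obtain ⟨a, x, hax⟩ := exists_fin_sum_smul_dirac_eq w (k := k) (s.erase y)
      (by rw [card_erase_of_mem hy]; omega)
    refine ⟨Fin.cons (w y) a, Fin.cons y x, ?_⟩
    rw [← add_sum_erase s _ hy, hax, Fin.sum_univ_succ]
    simp only [Fin.cons_zero, Fin.cons_succ]

lemma exists_eq_fin_sum_smul_dirac_iff {α : Type*} [MeasurableSpace α]
    [MeasurableSingletonClass α] [Nonempty α] {μ : Measure α} [IsFiniteMeasure μ] {k : ℕ} :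
    (∃ (a : Fin k → ℝ≥0) (x : Fin k → α), μ = ∑ l, (a l : ℝ≥0∞) • Measure.dirac (x l)) ↔
      ∃ s : Finset α, #s ≤ k ∧ ∀ᵐ y ∂μ, y ∈ s := by
  classical
  constructor
  · rintro ⟨a, x, rfl⟩
    refine ⟨univ.image x, card_image_le.trans (card_fin k).le, ?_⟩
    rw [ae_finsetSum_measure_iff]
    exact fun l _ => Measure.ae_smul_measure
      ((ae_dirac_iff (by measurability)).2 (mem_image_of_mem x (mem_univ l))) _
  · rintro ⟨s, hs, hae⟩
    obtain ⟨a, x, hax⟩ := exists_fin_sum_smul_dirac_eq (fun y => (μ {y}).toNNReal) s hs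
    refine ⟨a, x, (Measure.ae_mem_finset_iff.1 hae).trans (Eq.trans ?_ hax)⟩
    exact sum_congr rfl fun y _ => by rw [ENNReal.coe_toNNReal (measure_ne_top μ _)]

lemma integrable_one_add_norm_pow {E : Type*} [NormedAddCommGroup E] [MeasurableSpace E]
    [OpensMeasurableSpace E] {μ : Measure E} [IsFiniteMeasure μ] {m : ℕ}
    (hmom : Integrable (fun x => ‖x‖ ^ m) μ) :
    Integrable (fun x => (1 + ‖x‖) ^ m) μ := by
  refine (((integrable_const 1).add hmom).const_mul (2 ^ (m - 1))).mono'
    (continuous_norm.const_add 1 |>.pow m).aestronglyMeasurable (ae_of_all _ fun x => ?_)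
  rw [Real.norm_of_nonneg (by positivity)]
  simpa using add_pow_le zero_le_one (norm_nonneg x) m

section PairDistSqProd

variable {ι E : Type*} [Fintype ι] [LinearOrder ι] [NormedAddCommGroup E]

def pairDistSqProd (z : ι → E) : ℝ :=
  ∏ p ∈ univ.filter (fun p : ι × ι => p.1 < p.2), ‖z p.1 - z p.2‖ ^ 2

lemma pairDistSqProd_nonneg (z : ι → E) : 0 ≤ pairDistSqProd z :=
  prod_nonneg fun _ _ => sq_nonneg _

lemma continuous_pairDistSqProd : Continuous (pairDistSqProd : (ι → E) → ℝ) :=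
  continuous_finsetProd _ fun p _ =>
    (((continuous_apply p.1).sub (continuous_apply p.2)).norm).pow 2

lemma pairDistSqProd_eq_zero_iff {z : ι → E} : pairDistSqProd z = 0 ↔ ¬Injective z := by
  simp only [pairDistSqProd, prod_eq_zero_iff, mem_filter, mem_univ, true_and, ne_eq,
    OfNat.ofNat_ne_zero, not_false_eq_true, pow_eq_zero_iff, norm_eq_zero, sub_eq_zero,
    Prod.exists]
  constructor
  · rintro ⟨i, j, hij, heq⟩ hinj
    exact hij.ne (hinj heq)
  · intro hz
    obtain ⟨i, j, heq, hij⟩ := not_injective_iff.1 hz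
    rcases lt_or_gt_of_ne hij with h | h
    · exact ⟨i, j, h, heq⟩
    · exact ⟨j, i, h, heq.symm⟩

lemma pairDistSqProd_le_prod_one_add_norm_pow (z : ι → E) :
    pairDistSqProd z ≤ ∏ i, (1 + ‖z i‖) ^ (Fintype.card ι * (Fintype.card ι - 1)) := by
  set G := ∏ i, (1 + ‖z i‖)
  have one_le : ∀ i, 1 ≤ 1 + ‖z i‖ := fun i => le_add_of_nonneg_right (norm_nonneg _)
  have hG : 1 ≤ G := one_le_prod fun i _ => one_le i
  have hfactor : ∀ p ∈ univ.filter (fun p : ι × ι => p.1 < p.2),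
      ‖z p.1 - z p.2‖ ^ 2 ≤ G ^ 2 := by
    intro p hp
    have hne : p.1 ≠ p.2 := (mem_filter.1 hp).2.ne
    have hpair : (1 + ‖z p.1‖) * (1 + ‖z p.2‖) ≤ G := by
      rw [← prod_pair (f := fun i => 1 + ‖z i‖) hne]
      exact prod_le_prod_of_subset_of_one_le (subset_univ _)
        (fun i _ => zero_le_one.trans (one_le i)) fun i _ _ => one_le i
    have hnorm : ‖z p.1 - z p.2‖ ≤ (1 + ‖z p.1‖) * (1 + ‖z p.2‖) := by
      nlinarith [norm_sub_le (z p.1) (z p.2), norm_nonneg (z p.1), norm_nonneg (z p.2)]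
    gcongr
    exact hnorm.trans hpair
  have hcard : 2 * #(univ.filter (fun p : ι × ι => p.1 < p.2)) ≤
      Fintype.card ι * (Fintype.card ι - 1) := by
    rw [Fintype.card_product_filter_lt, Nat.choose_two_right]
    exact Nat.mul_div_le _ _
  calc pairDistSqProd z ≤ ∏ _p ∈ univ.filter (fun p : ι × ι => p.1 < p.2), G ^ 2 :=
        prod_le_prod (fun _ _ => sq_nonneg _) hfactor
    _ = G ^ (2 * #(univ.filter (fun p : ι × ι => p.1 < p.2))) := by rw [prod_const, ← pow_mul]
    _ ≤ G ^ (Fintype.card ι * (Fintype.card ι - 1)) := pow_le_pow_right₀ hG hcard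
    _ = ∏ i, (1 + ‖z i‖) ^ (Fintype.card ι * (Fintype.card ι - 1)) := (prod_pow _ _ _).symm

lemma integrable_pairDistSqProd [MeasurableSpace E] [OpensMeasurableSpace E]
    [SecondCountableTopology E] {μ : Measure E} [IsFiniteMeasure μ]
    (hmom : Integrable (fun x => ‖x‖ ^ (Fintype.card ι * (Fintype.card ι - 1))) μ) :
    Integrable pairDistSqProd (Measure.pi fun _ : ι => μ) :=
  (Integrable.fintype_prod fun _ => integrable_one_add_norm_pow hmom).mono'
    continuous_pairDistSqProd.aestronglyMeasurable (ae_of_all _ fun z => by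
      rw [Real.norm_of_nonneg (pairDistSqProd_nonneg z)]
      exact pairDistSqProd_le_prod_one_add_norm_pow z)

lemma ae_pairDistSqProd_eq_zero_iff [Nonempty E] [SecondCountableTopology E] [MeasurableSpace E]
    {μ : Measure E} [SigmaFinite μ] :
    pairDistSqProd =ᵐ[Measure.pi fun _ : ι => μ] 0 ↔
      ∃ s : Finset E, #s < Fintype.card ι ∧ ∀ᵐ x ∂μ, x ∈ s := by
  constructor
  · intro h
    have hsupp : ∀ y : ι → E, (∀ i, y i ∈ μ.support) → ¬Injective y := fun y hy =>
      pairDistSqProd_eq_zero_iff.1 <| continuous_pairDistSqProd.eq_of_ae_eq_of_mem_support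
        continuous_const h (Measure.mem_support_pi hy)
    have hlt : μ.support.encard < Fintype.card ι := by
      by_contra! hle
      obtain ⟨y, hyS, hinj⟩ := Set.exists_injective_mapsTo_of_card_le_encard (ι := ι)
        (by rwa [ENat.card_eq_coe_fintype_card])
      exact hsupp y hyS hinj
    have hfin : μ.support.Finite := Set.encard_lt_top_iff.1 (hlt.trans (ENat.natCast_lt_top _))
    refine ⟨hfin.toFinset, ?_, ?_⟩
    · rwa [hfin.encard_eq_coe_toFinset_card, Nat.cast_lt] at hlt
    · filter_upwards [Measure.support_mem_ae] with x hx using hfin.mem_toFinset.2 hx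
  · rintro ⟨s, hs, hae⟩
    have hcoord : ∀ᵐ z ∂Measure.pi fun _ : ι => μ, ∀ i, z i ∈ s :=
      ae_all_iff.2 fun i => Measure.tendsto_eval_ae_ae.eventually hae
    filter_upwards [hcoord] with z hz
    refine pairDistSqProd_eq_zero_iff.2 fun hinj => ?_
    have := card_le_card_of_injOn (s := univ) z (fun i _ => hz i) hinj.injOn
    rw [card_univ] at this
    omega

end PairDistSqProd

/-- `F_n(μ) = 0` iff `μ` is a convex combination of at most `n-1` Dirac
measures. -/
theorem stmt0 {d n : ℕ} (hn : 2 ≤ n) (μ : Measure (EuclideanSpace ℝ (Fin d)))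
    [IsProbabilityMeasure μ]
    (hmom : Integrable (fun x : EuclideanSpace ℝ (Fin d) => ‖x‖ ^ (n * (n - 1))) μ) :
    (∫ z : Fin n → EuclideanSpace ℝ (Fin d),
        ∏ p ∈ Finset.univ.filter (fun p : Fin n × Fin n => p.1 < p.2),
          ‖z p.1 - z p.2‖ ^ 2 ∂(Measure.pi fun _ => μ)) = 0 ↔
      ∃ (α : Fin (n - 1) → NNReal) (x : Fin (n - 1) → EuclideanSpace ℝ (Fin d)),
        μ = ∑ l, (α l : ℝ≥0∞) • Measure.dirac (x l) := by
  have hint : Integrable pairDistSqProd (Measure.pi fun _ : Fin n => μ) :=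
    integrable_pairDistSqProd (by simpa using hmom)
  change ∫ z, pairDistSqProd z ∂_ = 0 ↔ _
  rw [integral_eq_zero_iff_of_nonneg pairDistSqProd_nonneg hint, ae_pairDistSqProd_eq_zero_iff,
    exists_eq_fin_sum_smul_dirac_iff, Fintype.card_fin]
  simp only [Nat.lt_iff_le_pred (by omega : 0 < n)]
end

section
/- For every n ≥ 1, the set N_n = {μ ∈ P_2(ℝ^d) : μ = Σ_{l=1}^n α_l δ_{x^l} for some α_l ≥ 0 and x^l ∈ ℝ^d} of probability measures supported on at most n points is a closed subset of the 2-Wasserstein space P_2(ℝ^d). -/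
/-!
If the support of `ν` contained `n + 1` points, choose them `2ε`-separated. A measure with at
most `n` atoms then leaves one of them, `y`, at distance at least `ε` from all its atoms, so any
coupling of it with `ν` transports the mass `ν (ball y (ε/2))` over a distance at least `ε/2`.
This bounds `W2 (μ k) ν` below by a positive constant independent of `k`, which contradicts
`W2 (μ k) ν → 0`. Hence `ν.support` has at most `n` points, and as its complement is `ν`-null,
`ν` is a combination of at most `n` Dirac masses.
-/

open MeasureTheory
open scoped ENNReal

/-- Squared 2-Wasserstein distance, defined as the infimum over couplings with
integrable squared distance. -/
noncomputable def W2sq {d : ℕ} (μ ν : Measure (EuclideanSpace ℝ (Fin d))) : ℝ :=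
  sInf {r : ℝ | ∃ χ : Measure (EuclideanSpace ℝ (Fin d) × EuclideanSpace ℝ (Fin d)),
    IsProbabilityMeasure χ ∧ χ.map Prod.fst = μ ∧ χ.map Prod.snd = ν ∧
    Integrable (fun q => ‖q.1 - q.2‖ ^ 2) χ ∧ r = ∫ q, ‖q.1 - q.2‖ ^ 2 ∂χ}

/-- The 2-Wasserstein distance. -/
noncomputable def W2 {d : ℕ} (μ ν : Measure (EuclideanSpace ℝ (Fin d))) : ℝ :=
  Real.sqrt (W2sq μ ν)

open Filter Topology Metric
open scoped NNReal

section Atomic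

variable {E : Type*} [MeasurableSpace E]

lemma exists_sum_fin_dirac_eq_finset_sum [Nonempty E] {n : ℕ} (s : Finset E) (hs : s.card ≤ n)
    (c : E → ℝ≥0) :
    ∃ (α : Fin n → ℝ≥0) (x : Fin n → E),
      ∑ l, (α l : ℝ≥0∞) • Measure.dirac (x l) = ∑ y ∈ s, (c y : ℝ≥0∞) • Measure.dirac y := by
  obtain ⟨k, rfl⟩ := Nat.exists_eq_add_of_le hs
  let e := s.equivFin.symm
  refine ⟨Fin.append (fun i => c (e i)) 0,
    Fin.append (fun i => (e i : E)) fun _ => Classical.arbitrary E, ?_⟩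
  rw [Fin.sum_univ_add, ← Finset.sum_coe_sort s]
  simp only [Fin.append_left, Fin.append_right, Pi.zero_apply, ENNReal.coe_zero, zero_smul,
    Finset.sum_const_zero, add_zero]
  exact e.sum_comp (fun y : s => (c y : ℝ≥0∞) • Measure.dirac (y : E))

lemma ae_mem_range_sum_dirac [MeasurableSingletonClass E] {n : ℕ} (α : Fin n → ℝ≥0)
    (x : Fin n → E) : ∀ᵐ a ∂(∑ l, (α l : ℝ≥0∞) • Measure.dirac (x l)), a ∈ Set.range x := by
  simp only [ae_finsetSum_measure_iff, Finset.mem_univ, true_imp_iff]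
  intro l
  exact Measure.ae_smul_measure (by simp [ae_dirac_eq]) _

lemma MeasureTheory.Measure.exists_eq_sum_fin_dirac_of_encard_support_le [TopologicalSpace E]
    [HereditarilyLindelofSpace E] [MeasurableSingletonClass E] [Nonempty E] (ν : Measure E)
    [IsFiniteMeasure ν] {n : ℕ} (h : ν.support.encard ≤ n) :
    ∃ (α : Fin n → ℝ≥0) (x : Fin n → E), ν = ∑ l, (α l : ℝ≥0∞) • Measure.dirac (x l) := by
  have hfin := Set.finite_of_encard_le_coe h
  have hcard : hfin.toFinset.card ≤ n := by
    rw [hfin.encard_eq_coe_toFinset_card] at h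
    exact_mod_cast h
  obtain ⟨α, x, hx⟩ := exists_sum_fin_dirac_eq_finset_sum _ hcard fun y => (ν {y}).toNNReal
  refine ⟨α, x, ?_⟩
  simp only [hx, ENNReal.coe_toNNReal (measure_ne_top ν _)]
  refine Measure.ae_mem_finset_iff.1 ?_
  filter_upwards [Measure.support_mem_ae] with a ha using hfin.mem_toFinset.2 ha

end Atomic

section Metric

variable {E : Type*} [PseudoMetricSpace E]

lemma exists_forall_le_dist_of_card_lt {ι κ : Type*} [Fintype ι] [Fintype κ]
    (hcard : Fintype.card κ < Fintype.card ι) {y : ι → E} {ε : ℝ}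
    (hy : ∀ i j, i ≠ j → 2 * ε ≤ dist (y i) (y j)) (x : κ → E) :
    ∃ i, ∀ l, ε ≤ dist (x l) (y i) := by
  by_contra! h
  choose f hf using h
  obtain ⟨i, j, hij, hfij⟩ := Fintype.exists_ne_map_eq_of_card_lt f hcard
  have := dist_triangle_left (y i) (y j) (x (f i))
  linarith [hy i j hij, hf i, hfij ▸ hf j]

lemma measureReal_map_snd_mul_sq_le_integral_dist_sq [MeasurableSpace E]
    {χ : Measure (E × E)} [IsFiniteMeasure χ]
    (hint : Integrable (fun q : E × E => dist q.1 q.2 ^ 2) χ) {A B : Set E}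
    (hB : MeasurableSet B) (hA : ∀ᵐ q ∂χ, q.1 ∈ A) {r : ℝ} (hr : 0 ≤ r)
    (hAB : ∀ a ∈ A, ∀ b ∈ B, r ≤ dist a b) :
    (χ.map Prod.snd).real B * r ^ 2 ≤ ∫ q, dist q.1 q.2 ^ 2 ∂χ := by
  have hB' : MeasurableSet (Prod.snd ⁻¹' B : Set (E × E)) := measurable_snd hB
  calc (χ.map Prod.snd).real B * r ^ 2
      = ∫ q, (Prod.snd ⁻¹' B).indicator (fun _ => r ^ 2) q ∂χ := by
        rw [integral_indicator_const _ hB', map_measureReal_apply measurable_snd hB, smul_eq_mul]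
    _ ≤ ∫ q, dist q.1 q.2 ^ 2 ∂χ := by
        refine integral_mono_ae ((integrable_const _).indicator hB') hint ?_
        filter_upwards [hA] with q hq
        by_cases hqB : q.2 ∈ B
        · simpa [hqB] using pow_le_pow_left₀ hr (hAB _ hq _ hqB) 2
        · simp only [Set.indicator_of_notMem (show q ∉ Prod.snd ⁻¹' B from hqB)]
          positivity

end Metric

lemma Finset.exists_pos_two_mul_le_dist {E : Type*} [MetricSpace E] (s : Finset E) :
    ∃ ε > 0, ∀ a ∈ s, ∀ b ∈ s, a ≠ b → 2 * ε ≤ dist a b := by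
  have : ∀ᶠ ε in 𝓝[>] (0 : ℝ), ∀ p ∈ s.offDiag, 2 * ε ≤ dist p.1 p.2 := by
    refine (eventually_all_finset _).2 fun p hp => ?_
    have hpos := dist_pos.2 (Finset.mem_offDiag.1 hp).2.2
    have : Tendsto (fun ε : ℝ => 2 * ε) (𝓝[>] 0) (𝓝 0) := by
      simpa using ((continuous_const_mul (2 : ℝ)).tendsto 0).mono_left nhdsWithin_le_nhds
    exact this.eventually (eventually_le_nhds hpos)
  obtain ⟨ε, hsep, hε⟩ := (this.and self_mem_nhdsWithin).exists
  exact ⟨ε, hε, fun a ha b hb hab => hsep (a, b) (Finset.mem_offDiag.2 ⟨ha, hb, hab⟩)⟩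

lemma MeasureTheory.Measure.exists_pos_le_integral_dist_sq_of_lt_encard_support {E : Type*}
    [MetricSpace E] [MeasurableSpace E] [OpensMeasurableSpace E] [MeasurableSingletonClass E]
    (ν : Measure E) [IsFiniteMeasure ν] {n : ℕ} (hν : n < ν.support.encard) :
    ∃ c > 0, ∀ (χ : Measure (E × E)) [IsFiniteMeasure χ] (α : Fin n → ℝ≥0) (x : Fin n → E),
      χ.map Prod.fst = ∑ l, (α l : ℝ≥0∞) • Measure.dirac (x l) → χ.map Prod.snd = ν →
      Integrable (fun q : E × E => dist q.1 q.2 ^ 2) χ → c ≤ ∫ q, dist q.1 q.2 ^ 2 ∂χ := by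
  obtain ⟨t, hts, htcard⟩ := Set.exists_subset_encard_eq (Order.add_one_le_of_lt hν)
  have htfin : t.Finite := Set.finite_of_encard_eq_coe htcard
  set s := htfin.toFinset
  have hscard : n < s.card := by
    rw [htfin.encard_eq_coe_toFinset_card] at htcard
    exact_mod_cast htcard.ge
  obtain ⟨ε, hε, hsep⟩ := s.exists_pos_two_mul_le_dist
  obtain ⟨a₀, ha₀, hmin⟩ :=
    s.exists_min_image (fun a => ν.real (ball a (ε / 2))) (Finset.card_pos.1 (by omega))
  refine ⟨ν.real (ball a₀ (ε / 2)) * (ε / 2) ^ 2, mul_pos ?_ (by positivity), ?_⟩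
  · have ha₀ν : a₀ ∈ ν.support := hts (htfin.mem_toFinset.1 ha₀)
    exact ENNReal.toReal_pos ((Measure.mem_support_iff_forall _).1 ha₀ν _
      (ball_mem_nhds _ (by positivity))).ne' (measure_ne_top _ _)
  intro χ _ α x hfst hsnd hint
  obtain ⟨⟨y, hy⟩, hfar⟩ := exists_forall_le_dist_of_card_lt (y := ((↑) : s → E))
    (by simpa using hscard) (fun i j hij => hsep _ i.2 _ j.2 (Subtype.coe_ne_coe.2 hij)) x
  have hA : ∀ᵐ q ∂χ, q.1 ∈ Set.range x :=
    ae_of_ae_map measurable_fst.aemeasurable (hfst ▸ ae_mem_range_sum_dirac α x)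
  calc ν.real (ball a₀ (ε / 2)) * (ε / 2) ^ 2 ≤ ν.real (ball y (ε / 2)) * (ε / 2) ^ 2 :=
        mul_le_mul_of_nonneg_right (hmin y hy) (by positivity)
    _ ≤ _ := hsnd ▸ measureReal_map_snd_mul_sq_le_integral_dist_sq hint isOpen_ball.measurableSet
        hA (by positivity) ?_
  rintro _ ⟨l, rfl⟩ b hb
  linarith [hfar l, mem_ball.1 hb, dist_triangle (x l) b y]

lemma integrable_norm_sub_sq_prod {E : Type*} [NormedAddCommGroup E] [MeasurableSpace E]
    [OpensMeasurableSpace E] [SecondCountableTopology E] {μ ν : Measure E} [IsFiniteMeasure μ]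
    [IsFiniteMeasure ν]
    (hμ : Integrable (fun x => ‖x‖ ^ 2) μ) (hν : Integrable (fun x => ‖x‖ ^ 2) ν) :
    Integrable (fun q : E × E => ‖q.1 - q.2‖ ^ 2) (μ.prod ν) := by
  refine Integrable.mono' ((hμ.comp_fst ν).add (hν.comp_snd μ) |>.const_mul 2)
    ((continuous_fst.sub continuous_snd).norm.pow 2).aestronglyMeasurable
    (Eventually.of_forall fun q => ?_)
  rw [Real.norm_of_nonneg (by positivity)]
  show ‖q.1 - q.2‖ ^ 2 ≤ 2 * (‖q.1‖ ^ 2 + ‖q.2‖ ^ 2)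
  nlinarith [norm_sub_le q.1 q.2, norm_nonneg (q.1 - q.2), sq_nonneg (‖q.1‖ - ‖q.2‖)]

lemma le_W2sq_of_forall_le {d : ℕ} {μ ν : Measure (EuclideanSpace ℝ (Fin d))}
    [IsProbabilityMeasure μ] [IsProbabilityMeasure ν]
    (hμ : Integrable (fun x => ‖x‖ ^ 2) μ) (hν : Integrable (fun x => ‖x‖ ^ 2) ν) {c : ℝ}
    (h : ∀ χ : Measure (EuclideanSpace ℝ (Fin d) × EuclideanSpace ℝ (Fin d)),
      IsProbabilityMeasure χ → χ.map Prod.fst = μ → χ.map Prod.snd = ν →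
      Integrable (fun q => ‖q.1 - q.2‖ ^ 2) χ → c ≤ ∫ q, ‖q.1 - q.2‖ ^ 2 ∂χ) :
    c ≤ W2sq μ ν := by
  refine le_csInf ⟨_, μ.prod ν, inferInstance, by simp, by simp,
    integrable_norm_sub_sq_prod hμ hν, rfl⟩ ?_
  rintro _ ⟨χ, hχ, hfst, hsnd, hint, rfl⟩
  exact h χ hχ hfst hsnd hint

theorem stmt1_general {d n : ℕ}
    (μ : ℕ → Measure (EuclideanSpace ℝ (Fin d))) (ν : Measure (EuclideanSpace ℝ (Fin d)))
    (hμprob : ∀ k, IsProbabilityMeasure (μ k)) (hνprob : IsProbabilityMeasure ν)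
    (hμ2 : ∀ k, Integrable (fun x : EuclideanSpace ℝ (Fin d) => ‖x‖ ^ 2) (μ k))
    (hν2 : Integrable (fun x : EuclideanSpace ℝ (Fin d) => ‖x‖ ^ 2) ν)
    (hatom : ∀ k, ∃ (α : Fin n → NNReal) (x : Fin n → EuclideanSpace ℝ (Fin d)),
        μ k = ∑ l, (α l : ℝ≥0∞) • Measure.dirac (x l))
    (hconv : Filter.Tendsto (fun k => W2 (μ k) ν) Filter.atTop (nhds 0)) :
    ∃ (α : Fin n → NNReal) (x : Fin n → EuclideanSpace ℝ (Fin d)),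
      ν = ∑ l, (α l : ℝ≥0∞) • Measure.dirac (x l) := by
  rcases le_or_gt ν.support.encard n with hle | hlt
  · exact ν.exists_eq_sum_fin_dirac_of_encard_support_le hle
  obtain ⟨c, hc, hcost⟩ := ν.exists_pos_le_integral_dist_sq_of_lt_encard_support hlt
  have hW : ∀ k, √c ≤ W2 (μ k) ν := fun k => by
    obtain ⟨α, x, hk⟩ := hatom k
    refine Real.sqrt_le_sqrt (le_W2sq_of_forall_le (hμ2 k) hν2 fun χ _ hfst hsnd hint => ?_)
    simp_rw [← dist_eq_norm] at hint ⊢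
    exact hcost χ α x (hfst.trans hk) hsnd hint
  exact absurd (ge_of_tendsto' hconv hW) (not_le.2 (Real.sqrt_pos.2 hc))

/-- the set `N_n` of probability measures supported on at most `n` points is
closed in the 2-Wasserstein space `P_2(ℝ^d)` (stated via sequential closedness). -/
theorem stmt1 {d n : ℕ} (hn : 1 ≤ n)
    (μ : ℕ → Measure (EuclideanSpace ℝ (Fin d))) (ν : Measure (EuclideanSpace ℝ (Fin d)))
    (hμprob : ∀ k, IsProbabilityMeasure (μ k)) (hνprob : IsProbabilityMeasure ν)
    (hμ2 : ∀ k, Integrable (fun x : EuclideanSpace ℝ (Fin d) => ‖x‖ ^ 2) (μ k))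
    (hν2 : Integrable (fun x : EuclideanSpace ℝ (Fin d) => ‖x‖ ^ 2) ν)
    (hatom : ∀ k, ∃ (α : Fin n → NNReal) (x : Fin n → EuclideanSpace ℝ (Fin d)),
        μ k = ∑ l, (α l : ℝ≥0∞) • Measure.dirac (x l))
    (hconv : Filter.Tendsto (fun k => W2 (μ k) ν) Filter.atTop (nhds 0)) :
    ∃ (α : Fin n → NNReal) (x : Fin n → EuclideanSpace ℝ (Fin d)),
      ν = ∑ l, (α l : ℝ≥0∞) • Measure.dirac (x l) :=
  stmt1_general μ ν hμprob hνprob hμ2 hν2 hatom hconv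
end

section
/- Let v : ℝ^d → ℝ^d be Lipschitz continuous with constant L, let n ≥ 2, and let μ be a probability measure on ℝ^d with finite moment of order n(n-1). Then |Σ_{i₁≠i₂} ∫_{ℝ^{dn}} (z^{i₁} - z^{i₂})·v(z^{i₁}) ∏_{{i,j}≠{i₁,i₂}, i≠j} |z^i - z^j| dμ^{⊗n}(z)| ≤ L n(n-1) F_n(μ), where F_n(μ) = ∫ ∏_{i≠j} |z^i - z^j| dμ^{⊗n}(z). -/
open MeasureTheory
open scoped RealInnerProductSpace


section auxx
variable {E : Type*} [MeasurableSpace E]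

lemma aux_int_prod {n : ℕ} (μ : Measure E) [IsProbabilityMeasure μ]
    {h : E → ℝ} (hh : Integrable h μ) :
    Integrable (fun z : Fin n → E => ∏ i, h (z i)) (Measure.pi fun _ => μ) := by
  letI : MeasureSpace E := ⟨μ⟩
  exact Integrable.fintype_prod (f := fun _ : Fin n => h) (fun _ => hh)

lemma extract_prod {n : ℕ} (F : Fin n × Fin n → ℝ) (q : Fin n × Fin n) (hq : q.1 ≠ q.2) :
    ∏ p ∈ Finset.univ.filter (fun p : Fin n × Fin n => p.1 ≠ p.2), F p
      = F q * F (q.2, q.1) *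
        ∏ p ∈ Finset.univ.filter
            (fun p : Fin n × Fin n => p.1 ≠ p.2 ∧ p ≠ q ∧ p ≠ (q.2, q.1)), F p := by
  classical
  have hq1 : q ∈ Finset.univ.filter (fun p : Fin n × Fin n => p.1 ≠ p.2) := by simp [hq]
  have hq2 : (q.2, q.1) ∈ (Finset.univ.filter (fun p : Fin n × Fin n => p.1 ≠ p.2)).erase q := by
    refine Finset.mem_erase.2 ⟨?_, by simp [Ne.symm hq]⟩
    intro h
    exact hq ((Prod.ext_iff.1 h).1.symm)
  have hset : ((Finset.univ.filter (fun p : Fin n × Fin n => p.1 ≠ p.2)).erase q).erase (q.2, q.1)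
      = Finset.univ.filter
          (fun p : Fin n × Fin n => p.1 ≠ p.2 ∧ p ≠ q ∧ p ≠ (q.2, q.1)) := by
    ext p
    simp only [Finset.mem_erase, Finset.mem_filter, Finset.mem_univ, true_and]
    tauto
  rw [← Finset.mul_prod_erase _ _ hq1, ← Finset.mul_prod_erase _ _ hq2, ← mul_assoc, hset]

lemma swap_reindex_sum {n : ℕ} (f : Fin n × Fin n → ℝ) :
    ∑ q ∈ Finset.univ.filter (fun q : Fin n × Fin n => q.1 ≠ q.2), f q
      = ∑ q ∈ Finset.univ.filter (fun q : Fin n × Fin n => q.1 ≠ q.2), f (q.2, q.1) := by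
  apply Finset.sum_nbij' (fun q => (q.2, q.1)) (fun q => (q.2, q.1)) <;> simp [ne_comm, eq_comm]

lemma swap_reindex_prod {n : ℕ} (f : Fin n × Fin n → ℝ) :
    ∏ q ∈ Finset.univ.filter (fun q : Fin n × Fin n => q.1 ≠ q.2), f q
      = ∏ q ∈ Finset.univ.filter (fun q : Fin n × Fin n => q.1 ≠ q.2), f (q.2, q.1) := by
  apply Finset.prod_nbij' (fun q => (q.2, q.1)) (fun q => (q.2, q.1)) <;> simp [ne_comm, eq_comm]

lemma count_lemma {n : ℕ} (φ : Fin n → ℝ) :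
    ∏ p ∈ Finset.univ.filter (fun p : Fin n × Fin n => p.1 ≠ p.2), (φ p.1 * φ p.2)
      = ∏ i, (φ i ^ (n - 1) * φ i ^ (n - 1)) := by
  classical
  have key : ∏ p ∈ Finset.univ.filter (fun p : Fin n × Fin n => p.1 ≠ p.2), φ p.1
      = ∏ i, φ i ^ (n - 1) := by
    rw [Finset.prod_filter, Fintype.prod_prod_type]
    refine Finset.prod_congr rfl fun i _ => ?_
    rw [← Finset.prod_filter, Finset.filter_ne]
    have : (∏ a ∈ Finset.univ.erase i, φ (i, a).1) = φ i ^ (Finset.univ.erase i).card :=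
      Finset.prod_const (φ i)
    rw [this, Finset.card_erase_of_mem (Finset.mem_univ i), Finset.card_univ, Fintype.card_fin]
  rw [Finset.prod_mul_distrib, key, Finset.prod_mul_distrib]
  congr 1
  rw [swap_reindex_prod (fun p => φ p.2)]
  exact key

lemma pow_dominate {t : ℝ} (ht : 0 ≤ t) {a b : ℕ} (hab : a ≤ b) :
    (1 + t) ^ a ≤ 2 ^ a * (2 + t ^ b) := by
  have h2a : (0:ℝ) < 2 ^ a := by positivity
  have h1 : (1 + t) ^ a ≤ 2 ^ a * (1 + t ^ a) := by
    rcases le_total t 1 with h | h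
    · have : (1 + t) ^ a ≤ 2 ^ a := pow_le_pow_left₀ (by linarith) (by linarith) a
      nlinarith [pow_nonneg ht a]
    · have h' : (1 + t) ^ a ≤ (2 * t) ^ a := pow_le_pow_left₀ (by linarith) (by linarith) a
      rw [mul_pow] at h'
      nlinarith [pow_nonneg ht a]
  have h2 : t ^ a ≤ 1 + t ^ b := by
    rcases le_total t 1 with h | h
    · have := pow_le_one₀ ht h (n := a)
      nlinarith [pow_nonneg ht b]
    · have := pow_le_pow_right₀ h hab
      linarith
  nlinarith [pow_nonneg ht a]

end auxx

noncomputable section stmt8aux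

variable {d n : ℕ}

local notation "E" => EuclideanSpace ℝ (Fin d)

def driftG (v : E → E) (q : Fin n × Fin n) (z : Fin n → E) : ℝ :=
  ⟪z q.1 - z q.2, v (z q.1)⟫ *
    ∏ p ∈ Finset.univ.filter (fun p : Fin n × Fin n => p.1 ≠ p.2 ∧ p ≠ q ∧ p ≠ (q.2, q.1)),
      ‖z p.1 - z p.2‖

def gfull (n : ℕ) (z : Fin n → E) : ℝ :=
  ∏ p ∈ Finset.univ.filter (fun p : Fin n × Fin n => p.1 ≠ p.2), ‖z p.1 - z p.2‖

def domFn (n : ℕ) (x : E) : ℝ := (1 + ‖x‖) ^ (n - 1) * (1 + ‖x‖) ^ (n - 1)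

lemma gfull_nonneg (z : Fin n → E) : 0 ≤ gfull n z :=
  Finset.prod_nonneg fun p _ => norm_nonneg _

lemma fac_bound (a b : E) : ‖a - b‖ ≤ (1 + ‖a‖) * (1 + ‖b‖) := by
  have := norm_sub_le a b
  nlinarith [norm_nonneg a, norm_nonneg b]

lemma domFn_int (hn : 2 ≤ n) (μ : Measure E) [IsProbabilityMeasure μ]
    (hmom : Integrable (fun x : E => ‖x‖ ^ (n * (n - 1))) μ) :
    Integrable (domFn n) μ := by
  have hcont : Continuous (domFn (d := d) n) :=
    (((continuous_const.add continuous_norm).pow _).mul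
      ((continuous_const.add continuous_norm).pow _))
  refine Integrable.mono' (((integrable_const (2:ℝ)).add hmom).const_mul ((2:ℝ) ^ (2 * (n - 1))))
    hcont.aestronglyMeasurable ?_
  filter_upwards with x
  have h0 : (0:ℝ) ≤ 1 + ‖x‖ := by positivity
  have hEq : domFn n x = (1 + ‖x‖) ^ (2 * (n - 1)) := by
    rw [domFn, two_mul, pow_add]
  rw [Real.norm_eq_abs, abs_of_nonneg (by rw [hEq]; positivity), hEq]
  have hab : 2 * (n - 1) ≤ n * (n - 1) := Nat.mul_le_mul_right _ hn
  have := pow_dominate (norm_nonneg x) hab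
  simpa [mul_add] using this

lemma W_int (hn : 2 ≤ n) (μ : Measure E) [IsProbabilityMeasure μ]
    (hmom : Integrable (fun x : E => ‖x‖ ^ (n * (n - 1))) μ) :
    Integrable (fun z : Fin n → E => ∏ i, domFn n (z i)) (Measure.pi fun _ => μ) :=
  aux_int_prod μ (domFn_int hn μ hmom)

lemma prodW_eq (z : Fin n → E) :
    ∏ p ∈ Finset.univ.filter (fun p : Fin n × Fin n => p.1 ≠ p.2),
      ((1 + ‖z p.1‖) * (1 + ‖z p.2‖)) = ∏ i, domFn n (z i) :=
  count_lemma (fun i => 1 + ‖z i‖)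

lemma gfull_le (z : Fin n → E) : gfull n z ≤ ∏ i, domFn n (z i) := by
  rw [← prodW_eq z]
  exact Finset.prod_le_prod (fun p _ => norm_nonneg _) (fun p _ => fac_bound _ _)

lemma gfull_int (hn : 2 ≤ n) (μ : Measure E) [IsProbabilityMeasure μ]
    (hmom : Integrable (fun x : E => ‖x‖ ^ (n * (n - 1))) μ) :
    Integrable (gfull n) (Measure.pi fun _ => μ) := by
  have hcont : Continuous (gfull (d := d) n) := by
    apply continuous_finset_prod
    intro p _
    exact ((continuous_apply p.1).sub (continuous_apply p.2)).norm
  refine Integrable.mono' (W_int hn μ hmom) hcont.aestronglyMeasurable ?_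
  filter_upwards with z
  rw [Real.norm_eq_abs, abs_of_nonneg (gfull_nonneg z)]
  exact gfull_le z

lemma driftG_cont {v : E → E} (hvc : Continuous v) (q : Fin n × Fin n) :
    Continuous (driftG v q) := by
  apply Continuous.mul
  · exact Continuous.inner ((continuous_apply q.1).sub (continuous_apply q.2))
      (hvc.comp (continuous_apply q.1))
  · apply continuous_finset_prod
    intro p _
    exact ((continuous_apply p.1).sub (continuous_apply p.2)).norm

lemma driftG_bound {v : E → E} {K : ℝ} (hK : 0 ≤ K)
    (hvb : ∀ x : E, ‖v x‖ ≤ K * (1 + ‖x‖)) (q : Fin n × Fin n) (hq : q.1 ≠ q.2)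
    (z : Fin n → E) : |driftG v q z| ≤ K * ∏ i, domFn n (z i) := by
  set a1 := 1 + ‖z q.1‖ with ha1
  set a2 := 1 + ‖z q.2‖ with ha2
  have h1 : (1:ℝ) ≤ a1 := by rw [ha1]; linarith [norm_nonneg (z q.1)]
  have h2 : (1:ℝ) ≤ a2 := by rw [ha2]; linarith [norm_nonneg (z q.2)]
  have hPnn : 0 ≤ ∏ p ∈ Finset.univ.filter
      (fun p : Fin n × Fin n => p.1 ≠ p.2 ∧ p ≠ q ∧ p ≠ (q.2, q.1)), ‖z p.1 - z p.2‖ :=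
    Finset.prod_nonneg fun p _ => norm_nonneg _
  have e2 : (∏ p ∈ Finset.univ.filter
        (fun p : Fin n × Fin n => p.1 ≠ p.2 ∧ p ≠ q ∧ p ≠ (q.2, q.1)), ‖z p.1 - z p.2‖)
      ≤ ∏ p ∈ Finset.univ.filter
        (fun p : Fin n × Fin n => p.1 ≠ p.2 ∧ p ≠ q ∧ p ≠ (q.2, q.1)),
          ((1 + ‖z p.1‖) * (1 + ‖z p.2‖)) :=
    Finset.prod_le_prod (fun p _ => norm_nonneg _) (fun p _ => fac_bound _ _)
  have e1 : |⟪z q.1 - z q.2, v (z q.1)⟫| ≤ (a1 * a2) * (K * (a1 * a2)) := by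
    refine (abs_real_inner_le_norm _ _).trans ?_
    have l1 : ‖z q.1 - z q.2‖ ≤ a1 * a2 := fac_bound _ _
    have l2 : ‖v (z q.1)‖ ≤ K * (a1 * a2) := by
      refine (hvb (z q.1)).trans ?_
      rw [← ha1]
      have ha : a1 ≤ a1 * a2 := le_mul_of_one_le_right (by linarith) h2
      exact mul_le_mul_of_nonneg_left ha hK
    exact mul_le_mul l1 l2 (norm_nonneg _) (by positivity)
  have e3 : ∏ p ∈ Finset.univ.filter (fun p : Fin n × Fin n => p.1 ≠ p.2),
      ((1 + ‖z p.1‖) * (1 + ‖z p.2‖))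
      = (a1 * a2) * (a2 * a1) * ∏ p ∈ Finset.univ.filter
          (fun p : Fin n × Fin n => p.1 ≠ p.2 ∧ p ≠ q ∧ p ≠ (q.2, q.1)),
          ((1 + ‖z p.1‖) * (1 + ‖z p.2‖)) := by
    simpa using extract_prod (fun p => (1 + ‖z p.1‖) * (1 + ‖z p.2‖)) q hq
  calc |driftG v q z|
      = |⟪z q.1 - z q.2, v (z q.1)⟫| * ∏ p ∈ Finset.univ.filter
          (fun p : Fin n × Fin n => p.1 ≠ p.2 ∧ p ≠ q ∧ p ≠ (q.2, q.1)), ‖z p.1 - z p.2‖ := by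
        rw [driftG, abs_mul, abs_of_nonneg hPnn]
    _ ≤ (a1 * a2) * (K * (a1 * a2)) * ∏ p ∈ Finset.univ.filter
          (fun p : Fin n × Fin n => p.1 ≠ p.2 ∧ p ≠ q ∧ p ≠ (q.2, q.1)),
          ((1 + ‖z p.1‖) * (1 + ‖z p.2‖)) :=
        mul_le_mul e1 e2 hPnn (by positivity)
    _ = K * ((a1 * a2) * (a2 * a1) * ∏ p ∈ Finset.univ.filter
          (fun p : Fin n × Fin n => p.1 ≠ p.2 ∧ p ≠ q ∧ p ≠ (q.2, q.1)),
          ((1 + ‖z p.1‖) * (1 + ‖z p.2‖))) := by ring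
    _ = K * ∏ p ∈ Finset.univ.filter (fun p : Fin n × Fin n => p.1 ≠ p.2),
          ((1 + ‖z p.1‖) * (1 + ‖z p.2‖)) := by rw [← e3]
    _ = K * ∏ i, domFn n (z i) := by rw [prodW_eq z]

lemma driftG_int (hn : 2 ≤ n) {v : E → E} (hvc : Continuous v) {K : ℝ} (hK : 0 ≤ K)
    (hvb : ∀ x : E, ‖v x‖ ≤ K * (1 + ‖x‖)) (q : Fin n × Fin n) (hq : q.1 ≠ q.2)
    (μ : Measure E) [IsProbabilityMeasure μ]
    (hmom : Integrable (fun x : E => ‖x‖ ^ (n * (n - 1))) μ) :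
    Integrable (driftG v q) (Measure.pi fun _ => μ) := by
  refine Integrable.mono' ((W_int hn μ hmom).const_mul K)
    (driftG_cont hvc q).aestronglyMeasurable ?_
  filter_upwards with z
  rw [Real.norm_eq_abs]
  exact driftG_bound hK hvb q hq z

lemma driftG_add {v : E → E} (q : Fin n × Fin n) (z : Fin n → E) :
    driftG v q z + driftG v (q.2, q.1) z
      = ⟪z q.1 - z q.2, v (z q.1) - v (z q.2)⟫ *
          ∏ p ∈ Finset.univ.filter
            (fun p : Fin n × Fin n => p.1 ≠ p.2 ∧ p ≠ q ∧ p ≠ (q.2, q.1)), ‖z p.1 - z p.2‖ := by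
  have hsetq : Finset.univ.filter
        (fun p : Fin n × Fin n => p.1 ≠ p.2 ∧ p ≠ (q.2, q.1) ∧ p ≠ ((q.2, q.1).2, (q.2, q.1).1))
      = Finset.univ.filter
        (fun p : Fin n × Fin n => p.1 ≠ p.2 ∧ p ≠ q ∧ p ≠ (q.2, q.1)) := by
    ext p
    simp only [Finset.mem_filter, Finset.mem_univ, true_and, Prod.mk.eta]
    tauto
  rw [driftG, driftG, hsetq]
  rw [show z q.2 - z q.1 = -(z q.1 - z q.2) from (neg_sub _ _).symm, inner_neg_left,
    inner_sub_right]
  ring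

lemma driftG_add_bound {v : E → E} {L : ℝ}
    (hv : ∀ x y : E, ‖v x - v y‖ ≤ L * ‖x - y‖) (q : Fin n × Fin n) (hq : q.1 ≠ q.2)
    (z : Fin n → E) :
    |driftG v q z + driftG v (q.2, q.1) z| ≤ L * gfull n z := by
  rw [driftG_add]
  have hPnn : 0 ≤ ∏ p ∈ Finset.univ.filter
      (fun p : Fin n × Fin n => p.1 ≠ p.2 ∧ p ≠ q ∧ p ≠ (q.2, q.1)), ‖z p.1 - z p.2‖ :=
    Finset.prod_nonneg fun p _ => norm_nonneg _
  have e3 : gfull n z = ‖z q.1 - z q.2‖ * ‖z q.2 - z q.1‖ * ∏ p ∈ Finset.univ.filter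
      (fun p : Fin n × Fin n => p.1 ≠ p.2 ∧ p ≠ q ∧ p ≠ (q.2, q.1)), ‖z p.1 - z p.2‖ := by
    rw [gfull]
    simpa using extract_prod (fun p => ‖z p.1 - z p.2‖) q hq
  have e1 : |⟪z q.1 - z q.2, v (z q.1) - v (z q.2)⟫|
      ≤ ‖z q.1 - z q.2‖ * (L * ‖z q.1 - z q.2‖) := by
    refine (abs_real_inner_le_norm _ _).trans ?_
    exact mul_le_mul_of_nonneg_left (hv _ _) (norm_nonneg _)
  rw [abs_mul, abs_of_nonneg hPnn, e3, norm_sub_rev (z q.2) (z q.1)]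
  calc |⟪z q.1 - z q.2, v (z q.1) - v (z q.2)⟫| * ∏ p ∈ Finset.univ.filter
        (fun p : Fin n × Fin n => p.1 ≠ p.2 ∧ p ≠ q ∧ p ≠ (q.2, q.1)), ‖z p.1 - z p.2‖
      ≤ (‖z q.1 - z q.2‖ * (L * ‖z q.1 - z q.2‖)) * ∏ p ∈ Finset.univ.filter
        (fun p : Fin n × Fin n => p.1 ≠ p.2 ∧ p ≠ q ∧ p ≠ (q.2, q.1)), ‖z p.1 - z p.2‖ :=
        mul_le_mul_of_nonneg_right e1 hPnn
    _ = L * (‖z q.1 - z q.2‖ * ‖z q.1 - z q.2‖ * ∏ p ∈ Finset.univ.filter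
        (fun p : Fin n × Fin n => p.1 ≠ p.2 ∧ p ≠ q ∧ p ≠ (q.2, q.1)), ‖z p.1 - z p.2‖) := by
        ring

end stmt8aux


/-- the symmetrized bound for the drift term in terms of
`F_n(μ) = ∫ ∏_{i≠j} |z^i - z^j| dμ^{⊗n}` for a Lipschitz vector field `v`. -/
theorem stmt8 {d n : ℕ} (hn : 2 ≤ n) (L : ℝ) (hL : 0 ≤ L)
    (v : EuclideanSpace ℝ (Fin d) → EuclideanSpace ℝ (Fin d))
    (hv : ∀ x y : EuclideanSpace ℝ (Fin d), ‖v x - v y‖ ≤ L * ‖x - y‖)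
    (μ : Measure (EuclideanSpace ℝ (Fin d))) [IsProbabilityMeasure μ]
    (hmom : Integrable (fun x : EuclideanSpace ℝ (Fin d) => ‖x‖ ^ (n * (n - 1))) μ) :
    |∑ q ∈ Finset.univ.filter (fun q : Fin n × Fin n => q.1 ≠ q.2),
        ∫ z : Fin n → EuclideanSpace ℝ (Fin d),
          ⟪z q.1 - z q.2, v (z q.1)⟫ *
            ∏ p ∈ Finset.univ.filter (fun p : Fin n × Fin n =>
                p.1 ≠ p.2 ∧ p ≠ q ∧ p ≠ (q.2, q.1)),
              ‖z p.1 - z p.2‖ ∂(Measure.pi fun _ => μ)| ≤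
      L * (n : ℝ) * ((n : ℝ) - 1) *
        ∫ z : Fin n → EuclideanSpace ℝ (Fin d),
          ∏ p ∈ Finset.univ.filter (fun p : Fin n × Fin n => p.1 ≠ p.2),
            ‖z p.1 - z p.2‖ ∂(Measure.pi fun _ => μ) := by
  classical
  have hn' : (2:ℝ) ≤ (n:ℝ) := by exact_mod_cast hn
  set ν : Measure (Fin n → EuclideanSpace ℝ (Fin d)) := Measure.pi fun _ => μ with hν
  show |∑ q ∈ Finset.univ.filter (fun q : Fin n × Fin n => q.1 ≠ q.2),
      ∫ z, driftG v q z ∂ν| ≤ L * (n : ℝ) * ((n : ℝ) - 1) * ∫ z, gfull n z ∂ν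
  -- continuity and linear growth of v
  have hvc : Continuous v := by
    have hlip : LipschitzWith (Real.toNNReal L) v := by
      apply LipschitzWith.of_dist_le_mul
      intro x y
      rw [dist_eq_norm, dist_eq_norm]
      refine (hv x y).trans (mul_le_mul_of_nonneg_right ?_ (norm_nonneg _))
      exact Real.le_coe_toNNReal L
    exact hlip.continuous
  set C := ‖v 0‖ with hC
  have hCL : 0 ≤ C + L := by positivity
  have hvb : ∀ x : EuclideanSpace ℝ (Fin d), ‖v x‖ ≤ (C + L) * (1 + ‖x‖) := by
    intro x
    have h0 := norm_sub_norm_le (v x) (v 0)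
    have h1 := hv x 0
    rw [sub_zero] at h1
    have hC0 : 0 ≤ C := norm_nonneg _
    nlinarith [norm_nonneg x, norm_nonneg (v x)]
  -- integrability
  have hgint : Integrable (gfull n) ν := gfull_int hn μ hmom
  have hGint : ∀ q : Fin n × Fin n, q.1 ≠ q.2 → Integrable (driftG v q) ν :=
    fun q hq => driftG_int hn hvc hCL hvb q hq μ hmom
  have hFnn : 0 ≤ ∫ z, gfull n z ∂ν := integral_nonneg fun z => gfull_nonneg z
  -- key bound for symmetrized pairs
  have key : ∀ q ∈ Finset.univ.filter (fun q : Fin n × Fin n => q.1 ≠ q.2),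
      |(∫ z, driftG v q z ∂ν) + ∫ z, driftG v (q.2, q.1) z ∂ν| ≤ L * ∫ z, gfull n z ∂ν := by
    intro q hqmem
    have hq : q.1 ≠ q.2 := (Finset.mem_filter.1 hqmem).2
    have hq2 : (q.2, q.1).1 ≠ (q.2, q.1).2 := Ne.symm hq
    have i1 := hGint q hq
    have i2 := hGint (q.2, q.1) hq2
    rw [← integral_add i1 i2]
    calc |∫ z, (driftG v q z + driftG v (q.2, q.1) z) ∂ν|
        ≤ ∫ z, |driftG v q z + driftG v (q.2, q.1) z| ∂ν := by
          simpa [Real.norm_eq_abs] using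
            norm_integral_le_integral_norm (μ := ν) (fun z => driftG v q z + driftG v (q.2, q.1) z)
      _ ≤ ∫ z, L * gfull n z ∂ν := by
          refine integral_mono (i1.add i2).abs (hgint.const_mul L) ?_
          intro z
          exact driftG_add_bound hv q hq z
      _ = L * ∫ z, gfull n z ∂ν := integral_const_mul L _
  -- reindexing by swap
  have hswap : ∑ q ∈ Finset.univ.filter (fun q : Fin n × Fin n => q.1 ≠ q.2),
      ∫ z, driftG v q z ∂ν
      = ∑ q ∈ Finset.univ.filter (fun q : Fin n × Fin n => q.1 ≠ q.2),
        ∫ z, driftG v (q.2, q.1) z ∂ν :=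
    swap_reindex_sum (fun q => ∫ z, driftG v q z ∂ν)
  have hcard : (((Finset.univ.filter (fun q : Fin n × Fin n => q.1 ≠ q.2))).card : ℝ)
      = (n:ℝ) * (n:ℝ) - (n:ℝ) := by
    have e : (Finset.univ.filter (fun q : Fin n × Fin n => q.1 ≠ q.2))
        = (Finset.univ : Finset (Fin n)).offDiag := by
      ext p
      simp [Finset.mem_offDiag]
    rw [e, Finset.offDiag_card, Finset.card_univ, Fintype.card_fin]
    have hle : n ≤ n * n := Nat.le_mul_of_pos_left n (by omega)
    rw [Nat.cast_sub hle]
    push_cast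
    ring
  have h2 : 2 * |∑ q ∈ Finset.univ.filter (fun q : Fin n × Fin n => q.1 ≠ q.2),
      ∫ z, driftG v q z ∂ν|
      ≤ ((n:ℝ) * (n:ℝ) - (n:ℝ)) * (L * ∫ z, gfull n z ∂ν) := by
    have hsum2 : 2 * ∑ q ∈ Finset.univ.filter (fun q : Fin n × Fin n => q.1 ≠ q.2),
        ∫ z, driftG v q z ∂ν
        = ∑ q ∈ Finset.univ.filter (fun q : Fin n × Fin n => q.1 ≠ q.2),
          ((∫ z, driftG v q z ∂ν) + ∫ z, driftG v (q.2, q.1) z ∂ν) := by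
      rw [two_mul]
      nth_rewrite 2 [hswap]
      rw [← Finset.sum_add_distrib]
    calc 2 * |∑ q ∈ Finset.univ.filter (fun q : Fin n × Fin n => q.1 ≠ q.2),
          ∫ z, driftG v q z ∂ν|
        = |2 * ∑ q ∈ Finset.univ.filter (fun q : Fin n × Fin n => q.1 ≠ q.2),
            ∫ z, driftG v q z ∂ν| := by rw [abs_mul, abs_two]
      _ = |∑ q ∈ Finset.univ.filter (fun q : Fin n × Fin n => q.1 ≠ q.2),
            ((∫ z, driftG v q z ∂ν) + ∫ z, driftG v (q.2, q.1) z ∂ν)| := by rw [hsum2]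
      _ ≤ ∑ q ∈ Finset.univ.filter (fun q : Fin n × Fin n => q.1 ≠ q.2),
            |(∫ z, driftG v q z ∂ν) + ∫ z, driftG v (q.2, q.1) z ∂ν| :=
          Finset.abs_sum_le_sum_abs _ _
      _ ≤ ∑ _q ∈ Finset.univ.filter (fun q : Fin n × Fin n => q.1 ≠ q.2),
            (L * ∫ z, gfull n z ∂ν) := Finset.sum_le_sum key
      _ = ((n:ℝ) * (n:ℝ) - (n:ℝ)) * (L * ∫ z, gfull n z ∂ν) := by
          rw [Finset.sum_const, nsmul_eq_mul, hcard]
  have hLF : 0 ≤ L * ∫ z, gfull n z ∂ν := mul_nonneg hL hFnn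
  have hfac : (0:ℝ) ≤ ((n:ℝ) * (n:ℝ) - (n:ℝ)) := by nlinarith
  nlinarith [abs_nonneg (∑ q ∈ Finset.univ.filter (fun q : Fin n × Fin n => q.1 ≠ q.2),
    ∫ z, driftG v q z ∂ν), mul_nonneg hfac hLF]
end
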